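/- arXiv:1609.05642 — 5 statements merged into one kernel-verified Lean document; each statement's English description precedes it below -/
import Mathlib

section
/- Let f : B ⟶ A and g : C ⟶ A be morphisms of simplicial sets, and let f↓g denote the comma simplicial set, defined as the pullback of the map ⟨cod,dom⟩ : A^{Δ[1]} ⟶ A × A (whose two components are given by evaluation at the two vertices of Δ[1]) along g × f : C × B ⟶ A × A. Then for every simplicial set J there is an isomorphism of simplicial sets (f↓g)^J ≅ (f^J)↓(g^J), where (−)^J denotes the internal hom in simplicial sets and f^J : B^J ⟶ A^J, g^J : C^J ⟶ A^J are the induced maps; moreover this isomorphism commutes with the canonical projections to C^J × B^J. -/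
/-
`(-)^J` is a right adjoint, so it carries the pullback defining `f ↓ g` to a pullback and
`C × B`, `A × A` to products. It remains to compare `(A^{Δ[1]})^J` with `(A^J)^{Δ[1]}` over
`A^J × A^J`: both represent maps `J × Δ[1] × T ⟶ A`, and exchanging the two exponents is an
isomorphism that commutes with evaluation at any point of `Δ[1]`, in particular at its two
vertices.
-/

open CategoryTheory Simplicial MonoidalCategory Limits Opposite

namespace SSet

noncomputable instance : MonoidalClosed SSet.{0} :=
  (inferInstance : MonoidalClosed (SimplexCategoryᵒᵖ ⥤ Type 0))

noncomputable section

/-- Evaluation of `A^{Δ[1]}` at the vertex `i` of `Δ[1]`. -/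
def evVertex (A : SSet.{0}) (i : Fin 2) : (ihom Δ[1]).obj A ⟶ A :=
  (λ_ _).inv ≫
    ((unitHomEquiv Δ[1]).symm (stdSimplex.const 1 i (op ⦋0⦌)) ▷ (ihom Δ[1]).obj A) ≫
      (ihom.ev Δ[1]).app A

/-- The map `⟨cod, dom⟩ : A^{Δ[1]} ⟶ A × A` given by evaluation at the two vertices of `Δ[1]`
(codomain first, domain second). -/
def codDom (A : SSet.{0}) : (ihom Δ[1]).obj A ⟶ A ⊗ A :=
  CartesianMonoidalCategory.lift (evVertex A 1) (evVertex A 0)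

/-- The comma simplicial set `f ↓ g` of a cospan `f : B ⟶ A`, `g : C ⟶ A`, defined as the
pullback of `⟨cod, dom⟩ : A^{Δ[1]} ⟶ A × A` along `g × f : C × B ⟶ A × A`. -/
def commaSSet {A B C : SSet.{0}} (f : B ⟶ A) (g : C ⟶ A) : SSet.{0} :=
  pullback (f := g ⊗ₘ f) (g := codDom A)

/-- The canonical projection `f ↓ g ⟶ C × B`. -/
def commaProj {A B C : SSet.{0}} (f : B ⟶ A) (g : C ⟶ A) : commaSSet f g ⟶ C ⊗ B :=
  pullback.fst (g ⊗ₘ f) (codDom A)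

end

end SSet

namespace CategoryTheory.MonoidalClosed

open MonoidalCategory CartesianMonoidalCategory

variable {C : Type*} [Category C] [CartesianMonoidalCategory C]

def tensorLeftComm (X Y Z : C) : X ⊗ (Y ⊗ Z) ⟶ Y ⊗ (X ⊗ Z) :=
  lift (snd _ _ ≫ fst _ _) (lift (fst _ _) (snd _ _ ≫ snd _ _))

lemma tensorLeftComm_comp_tensorLeftComm (X Y Z : C) :
    tensorLeftComm X Y Z ≫ tensorLeftComm Y X Z = 𝟙 _ := by
  ext <;> simp [tensorLeftComm]

lemma whiskerLeft_whiskerLeft_comp_tensorLeftComm (X Y : C) {Z Z' : C} (h : Z ⟶ Z') :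
    X ◁ Y ◁ h ≫ tensorLeftComm X Y Z' = tensorLeftComm X Y Z ≫ Y ◁ X ◁ h := by
  ext <;> simp [tensorLeftComm]

lemma whiskerLeft_leftUnitor_inv_whiskerRight_tensorLeftComm (X : C) {Y : C} (v : 𝟙_ C ⟶ Y)
    (Z : C) :
    X ◁ (λ_ Z).inv ≫ X ◁ v ▷ Z ≫ tensorLeftComm X Y Z = (λ_ _).inv ≫ v ▷ (X ⊗ Z) := by
  ext <;> simp [tensorLeftComm]

variable [MonoidalClosed C]

def ihomSwap (J D X : C) : (ihom J).obj ((ihom D).obj X) ⟶ (ihom D).obj ((ihom J).obj X) :=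
  curry (curry (tensorLeftComm J D _ ≫ D ◁ (ihom.ev J).app _ ≫ (ihom.ev D).app X))

lemma whiskerLeft_whiskerLeft_ihomSwap_comp_ev (J D X : C) :
    J ◁ D ◁ ihomSwap J D X ≫ J ◁ (ihom.ev D).app _ ≫ (ihom.ev J).app X =
      tensorLeftComm J D _ ≫ D ◁ (ihom.ev J).app _ ≫ (ihom.ev D).app X := by
  rw [← whiskerLeft_comp_assoc, ihomSwap, whiskerLeft_curry_ihom_ev_app,
    whiskerLeft_curry_ihom_ev_app]

lemma ihomSwap_comp_ihomSwap (J D X : C) : ihomSwap J D X ≫ ihomSwap D J X = 𝟙 _ := by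
  apply uncurry_injective
  apply uncurry_injective
  simp only [uncurry_eq, whiskerLeft_comp, Category.assoc]
  rw [whiskerLeft_whiskerLeft_ihomSwap_comp_ev,
    reassoc_of% whiskerLeft_whiskerLeft_comp_tensorLeftComm,
    whiskerLeft_whiskerLeft_ihomSwap_comp_ev, reassoc_of% tensorLeftComm_comp_tensorLeftComm]
  simp

instance (J D X : C) : IsIso (ihomSwap J D X) :=
  ⟨ihomSwap D J X, ihomSwap_comp_ihomSwap J D X, ihomSwap_comp_ihomSwap D J X⟩

def evAt {D : C} (v : 𝟙_ C ⟶ D) (X : C) : (ihom D).obj X ⟶ X :=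
  (λ_ _).inv ≫ v ▷ _ ≫ (ihom.ev D).app X

lemma ihomSwap_comp_evAt (J : C) {D : C} (v : 𝟙_ C ⟶ D) (X : C) :
    ihomSwap J D X ≫ evAt v ((ihom J).obj X) = (ihom J).map (evAt v X) := by
  apply uncurry_injective
  have ihomSwap_comp_insertPoint : ihomSwap J D X ≫ (λ_ _).inv ≫ v ▷ _ =
      (λ_ _).inv ≫ v ▷ _ ≫ D ◁ ihomSwap J D X := by
    rw [leftUnitor_inv_naturality_assoc, whisker_exchange]
  rw [uncurry_ihom_map, uncurry_eq, evAt, reassoc_of% ihomSwap_comp_insertPoint, ihomSwap,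
    whiskerLeft_curry_ihom_ev_app]
  simp only [whiskerLeft_comp, Category.assoc, whiskerLeft_curry_ihom_ev_app]
  rw [reassoc_of% whiskerLeft_leftUnitor_inv_whiskerRight_tensorLeftComm,
    ← whisker_exchange_assoc]
  exact (leftUnitor_inv_naturality_assoc _ _).symm

end CategoryTheory.MonoidalClosed

namespace SSet

noncomputable section

open MonoidalClosed CartesianMonoidalCategory

lemma ihom_map_codDom_comp_prodComparison (J A : SSet.{0}) :
    (ihom J).map (codDom A) ≫ prodComparison (ihom J) A A =
      ihomSwap J Δ[1] A ≫ codDom ((ihom J).obj A) := by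
  apply CartesianMonoidalCategory.hom_ext
  · simp only [codDom, Category.assoc, lift_fst]
    exact (ihomSwap_comp_evAt J _ A).symm
  · simp only [codDom, Category.assoc, lift_snd]
    exact (ihomSwap_comp_evAt J _ A).symm

def ihomCommaIso {A B C : SSet.{0}} (f : B ⟶ A) (g : C ⟶ A) (J : SSet.{0}) :
    (ihom J).obj (commaSSet f g) ≅ commaSSet ((ihom J).map f) ((ihom J).map g) :=
  PreservesPullback.iso (ihom J) (g ⊗ₘ f) (codDom A) ≪≫
    @asIso _ _ _ _ _ (pullback.map_isIso _ _ _ _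
      (CartesianMonoidalCategory.prodComparison (ihom J) C B) (ihomSwap J Δ[1] A)
      (CartesianMonoidalCategory.prodComparison (ihom J) A A)
      (prodComparison_natural (ihom J) g f) (ihom_map_codDom_comp_prodComparison J A))

lemma ihomCommaIso_hom_comp_commaProj {A B C : SSet.{0}} (f : B ⟶ A) (g : C ⟶ A)
    (J : SSet.{0}) : (ihomCommaIso f g J).hom ≫ commaProj ((ihom J).map f) ((ihom J).map g) =
      (ihom J).map (commaProj f g) ≫ prodComparison (ihom J) C B := by
  unfold ihomCommaIso commaProj commaSSet
  simp only [Iso.trans_hom, asIso_hom, Category.assoc,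
    pullback.lift_fst, PreservesPullback.iso_hom_fst_assoc]

/-- Cotensoring with a simplicial set `J` commutes with the comma construction: there is an
isomorphism `(f↓g)^J ≅ (f^J)↓(g^J)` commuting with the canonical projections to `C^J` and
`B^J`. -/
theorem ihom_commaSSet_iso {A B C : SSet.{0}} (f : B ⟶ A) (g : C ⟶ A) (J : SSet.{0}) :
    ∃ e : (ihom J).obj (commaSSet f g) ≅ commaSSet ((ihom J).map f) ((ihom J).map g),
      e.hom ≫ (commaProj ((ihom J).map f) ((ihom J).map g) ≫
          CartesianMonoidalCategory.fst ((ihom J).obj C) ((ihom J).obj B)) =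
        (ihom J).map (commaProj f g ≫ CartesianMonoidalCategory.fst C B) ∧
      e.hom ≫ (commaProj ((ihom J).map f) ((ihom J).map g) ≫
          CartesianMonoidalCategory.snd ((ihom J).obj C) ((ihom J).obj B)) =
        (ihom J).map (commaProj f g ≫ CartesianMonoidalCategory.snd C B) := by
  refine ⟨ihomCommaIso f g J, ?_, ?_⟩ <;>
    rw [reassoc_of% ihomCommaIso_hom_comp_commaProj, Functor.map_comp]
  · rw [CartesianMonoidalCategory.prodComparison_fst]
  · rw [CartesianMonoidalCategory.prodComparison_snd]

end

end SSet
end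

section
/- Let F : C ⥤ D be a smothering functor, i.e., F is surjective on objects, full, and conservative. Then for every object d of D, the fiber of F over d — the category whose objects are objects c of C with F(c) = d and whose morphisms c → c' are morphisms u of C with F(u) equal to the identity of d (modulo the equalities F(c) = d = F(c')) — is a nonempty connected groupoid: there exists an object in the fiber, any two objects of the fiber are related by a morphism of the fiber, and every morphism of the fiber is an isomorphism. -/
open CategoryTheory

/-- The fibers of a smothering functor (surjective on objects, full, and conservative) are
nonempty connected groupoids: the fiber over any object `d` (whose objects are objects `c`
with `F(c) = d` and whose morphisms are those mapping to `𝟙 d`) is nonempty, any two of its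
objects are connected by a morphism, and all of its morphisms are isomorphisms. -/
theorem smothering_fiber_nonempty_connected_groupoid
    {C : Type*} {D : Type*} [Category C] [Category D] (F : C ⥤ D)
    (hsurj : ∀ d : D, ∃ c : C, F.obj c = d)
    (hfull : F.Full)
    (hconservative : ∀ {c c' : C} (u : c ⟶ c'), IsIso (F.map u) → IsIso u)
    (d : D) :
    Nonempty (F.Fiber d) ∧
      (∀ c c' : F.Fiber d, Nonempty (c ⟶ c')) ∧
      (∀ (c c' : F.Fiber d) (u : c ⟶ c'), IsIso u) := by
  refine ⟨?_, ?_, ?_⟩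
  · obtain ⟨c, hc⟩ := hsurj d
    exact ⟨⟨c, hc⟩⟩
  · intro c c'
    obtain ⟨u, hu⟩ := hfull.map_surjective (eqToHom (c.2.trans c'.2.symm))
    refine ⟨⟨u, ?_⟩⟩
    exact CategoryTheory.IsHomLift.of_fac' F (𝟙 d) u c.2 c'.2 (by rw [hu]; simp)
  · intro c c' u
    have := u.2
    have h1 : IsIso (F.map u.1) := by
      rw [CategoryTheory.IsHomLift.fac' F (𝟙 d) u.1]
      infer_instance
    have h2 : IsIso u.1 := hconservative u.1 h1
    have hl : F.IsHomLift (Iso.refl d).hom (asIso u.1).hom := u.2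
    have h3 : F.IsHomLift (𝟙 d) (inv u.1) :=
      CategoryTheory.IsHomLift.inv_lift_inv F (Iso.refl d) (asIso u.1)
    refine ⟨⟨⟨inv u.1, h3⟩, ?_, ?_⟩⟩
    · apply Functor.Fiber.hom_ext
      exact IsIso.hom_inv_id u.1
    · apply Functor.Fiber.hom_ext
      exact IsIso.inv_hom_id u.1
end

section
/- Let F : X ⥤ A and U : A ⥤ X be functors between categories. Then F is left adjoint to U if and only if there exists an equivalence of categories K : Comma F (𝟭 A) ≌ Comma (𝟭 X) U between the comma categories F↓A and X↓U that commutes with the canonical projection functors to X and to A (i.e., K followed by the two projections of Comma (𝟭 X) U equals the two projections of Comma F (𝟭 A)). -/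
/-!
A functor `K : F↓A ⥤ X↓U` over `X × A` is, up to isomorphism, of the form `Comma.mapHom φ` for a
family `φ : (F x ⟶ a) → (x ⟶ U a)`, natural in `x` and `a` because `K` acts on morphisms:
`φ f` is the structure map of `K ⟨x, a, f⟩`, transported back over `(x, a)`. Fullness of `K`
makes `φ` injective (two objects over `(x, a)` are related by a morphism over `(𝟙 x, 𝟙 a)` only if
they are equal), essential surjectivity makes it surjective, so `φ` is the hom-set bijection of an
adjunction `F ⊣ U`. Conversely, the hom-set bijection of an adjunction and its inverse induce
mutually inverse functors `F↓A ⇄ X↓U` that are the identity on the projections.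
-/

open CategoryTheory

namespace CategoryTheory.Comma

variable {T₁ T₂ T₃ T₄ : Type*} [Category T₁] [Category T₂] [Category T₃] [Category T₄]
  {L : T₁ ⥤ T₃} {R : T₂ ⥤ T₃} {L' : T₁ ⥤ T₄} {R' : T₂ ⥤ T₄}

section MapHom

variable (φ : ∀ {x a}, (L.obj x ⟶ R.obj a) → (L'.obj x ⟶ R'.obj a))
  (hφ : ∀ {x x' a a'} {f : L.obj x ⟶ R.obj a} {f' : L.obj x' ⟶ R.obj a'} (l : x ⟶ x')
    (r : a ⟶ a'), L.map l ≫ f' = f ≫ R.map r → L'.map l ≫ φ f' = φ f ≫ R'.map r)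

def mapHom : Comma L R ⥤ Comma L' R' where
  obj c := ⟨c.left, c.right, φ c.hom⟩
  map m := ⟨m.left, m.right, hφ m.left m.right m.w⟩

lemma injective_of_full_mapHom [(mapHom φ hφ).Full] (x : T₁) (a : T₂) :
    Function.Injective (φ : (L.obj x ⟶ R.obj a) → _) := by
  intro f f' h
  let m : (mapHom φ hφ).obj ⟨x, a, f⟩ ⟶ (mapHom φ hφ).obj ⟨x, a, f'⟩ :=
    ⟨𝟙 x, 𝟙 a, show L'.map (𝟙 x) ≫ φ f' = φ f ≫ R'.map (𝟙 a) by simp [h]⟩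
  have hm := (mapHom φ hφ).map_preimage m
  have hl : ((mapHom φ hφ).preimage m).left = 𝟙 x := congrArg CommaMorphism.left hm
  have hr : ((mapHom φ hφ).preimage m).right = 𝟙 a := congrArg CommaMorphism.right hm
  simpa [hl, hr] using ((mapHom φ hφ).preimage m).w.symm

lemma surjective_of_essSurj_mapHom [(mapHom φ hφ).EssSurj] (x : T₁) (a : T₂) :
    Function.Surjective (φ : (L.obj x ⟶ R.obj a) → _) := by
  intro g
  let d : Comma L' R' := ⟨x, a, g⟩
  let c := (mapHom φ hφ).objPreimage d
  let e := (mapHom φ hφ).objObjPreimageIso d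
  let l : c.left ≅ x := leftIso e
  let r : c.right ≅ a := rightIso e
  refine ⟨L.map l.inv ≫ c.hom ≫ R.map r.hom, ?_⟩
  have h := hφ (f := c.hom) (f' := L.map l.inv ≫ c.hom ≫ R.map r.hom) l.hom r.hom (by simp)
  have hw : L'.map l.hom ≫ g = φ c.hom ≫ R'.map r.hom := e.hom.w
  rw [← hw] at h
  exact (cancel_epi _).1 h

end MapHom

def mapHomEquiv (e : ∀ {x a}, (L.obj x ⟶ R.obj a) ≃ (L'.obj x ⟶ R'.obj a))
    (he : ∀ {x x' a a'} {f : L.obj x ⟶ R.obj a} {f' : L.obj x' ⟶ R.obj a'} (l : x ⟶ x')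
      (r : a ⟶ a'), L.map l ≫ f' = f ≫ R.map r ↔ L'.map l ≫ e f' = e f ≫ R'.map r) :
    Comma L R ≌ Comma L' R' where
  functor := mapHom e fun l r => (he l r).1
  inverse := mapHom e.symm fun l r h => (he l r).2 (by simpa using h)
  unitIso := NatIso.ofComponents (fun c => isoMk (Iso.refl _) (Iso.refl _) (by simp [mapHom]))
    (fun _ => by ext <;> simp [mapHom])
  counitIso := NatIso.ofComponents (fun d => isoMk (Iso.refl _) (Iso.refl _) (by simp [mapHom]))
    (fun _ => by ext <;> simp [mapHom])
  functor_unitIso_comp _ := by ext <;> simp [mapHom]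

section Transfer

variable (K : Comma L R ⥤ Comma L' R') (α : K ⋙ fst L' R' ≅ fst L R)
  (β : K ⋙ snd L' R' ≅ snd L R)

def transferHom {x : T₁} {a : T₂} (f : L.obj x ⟶ R.obj a) : L'.obj x ⟶ R'.obj a :=
  L'.map (α.inv.app ⟨x, a, f⟩) ≫ (K.obj ⟨x, a, f⟩).hom ≫ R'.map (β.hom.app ⟨x, a, f⟩)

lemma transferHom_naturality {x x' : T₁} {a a' : T₂} {f : L.obj x ⟶ R.obj a}
    {f' : L.obj x' ⟶ R.obj a'} (l : x ⟶ x') (r : a ⟶ a') (h : L.map l ≫ f' = f ≫ R.map r) :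
    L'.map l ≫ transferHom K α β f' = transferHom K α β f ≫ R'.map r := by
  let m : (⟨x, a, f⟩ : Comma L R) ⟶ ⟨x', a', f'⟩ := ⟨l, r, h⟩
  have hl : l ≫ α.inv.app ⟨x', a', f'⟩ = α.inv.app ⟨x, a, f⟩ ≫ (K.map m).left :=
    α.inv.naturality m
  have hr : (K.map m).right ≫ β.hom.app ⟨x', a', f'⟩ = β.hom.app ⟨x, a, f⟩ ≫ r :=
    β.hom.naturality m
  simp only [transferHom, ← L'.map_comp_assoc, hl]
  rw [L'.map_comp_assoc, (K.map m).w_assoc, ← R'.map_comp, hr, R'.map_comp]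
  simp only [Category.assoc]

def isoMapHomTransferHom : K ≅ mapHom (transferHom K α β) (transferHom_naturality K α β) :=
  NatIso.ofComponents
    (fun c => isoMk (α.app c) (β.app c) (by
      change L'.map (α.hom.app c) ≫ L'.map (α.inv.app c) ≫ (K.obj c).hom ≫ R'.map (β.hom.app c) =
        (K.obj c).hom ≫ R'.map (β.hom.app c)
      rw [← L'.map_comp_assoc, Iso.hom_inv_id_app, L'.map_id, Category.id_comp]))
    (fun m => by ext; exacts [α.hom.naturality m, β.hom.naturality m])

end Transfer

end CategoryTheory.Comma

namespace CategoryTheory.Adjunction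

variable {X A : Type*} [Category X] [Category A] {F : X ⥤ A} {U : A ⥤ X}

def commaEquiv (adj : F ⊣ U) : Comma F (𝟭 A) ≌ Comma (𝟭 X) U :=
  Comma.mapHomEquiv (adj.homEquiv _ _) fun l r => by
    rw [← Equiv.apply_eq_iff_eq (adj.homEquiv _ _), homEquiv_naturality_left,
      homEquiv_naturality_right, Functor.id_map, Functor.id_map]

noncomputable def ofCommaMapHom (φ : ∀ {x a}, (F.obj x ⟶ a) → (x ⟶ U.obj a))
    (hφ : ∀ {x x' a a'} {f : F.obj x ⟶ a} {f' : F.obj x' ⟶ a'} (l : x ⟶ x') (r : a ⟶ a'),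
      F.map l ≫ f' = f ≫ r → l ≫ φ f' = φ f ≫ U.map r)
    [(Comma.mapHom (R := 𝟭 A) (L' := 𝟭 X) φ hφ).Full]
    [(Comma.mapHom (R := 𝟭 A) (L' := 𝟭 X) φ hφ).EssSurj] : F ⊣ U :=
  let e x a : (F.obj x ⟶ a) ≃ (x ⟶ U.obj a) :=
    Equiv.ofBijective φ ⟨Comma.injective_of_full_mapHom (R := 𝟭 A) (L' := 𝟭 X) φ hφ x a,
      Comma.surjective_of_essSurj_mapHom (R := 𝟭 A) (L' := 𝟭 X) φ hφ x a⟩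
  mkOfHomEquiv
    { homEquiv := e
      homEquiv_naturality_left_symm := fun {_ x a} g h => by
        have hg := hφ (f := F.map g ≫ (e x a).symm h) (f' := (e x a).symm h) g (𝟙 a) (by simp)
        have he : φ ((e x a).symm h) = h := (e x a).apply_symm_apply h
        rw [he, U.map_id, Category.comp_id] at hg
        rw [Equiv.symm_apply_eq]
        exact hg
      homEquiv_naturality_right := fun f h =>
        show φ (f ≫ h) = φ f ≫ U.map h by simpa using hφ (𝟙 _) h (by simp) }

noncomputable def ofCommaFunctor (K : Comma F (𝟭 A) ⥤ Comma (𝟭 X) U) [K.Full] [K.EssSurj]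
    (α : K ⋙ Comma.fst _ _ ≅ Comma.fst _ _) (β : K ⋙ Comma.snd _ _ ≅ Comma.snd _ _) : F ⊣ U :=
  have := Functor.Full.of_iso (Comma.isoMapHomTransferHom K α β)
  have := Functor.essSurj_of_iso (Comma.isoMapHomTransferHom K α β)
  ofCommaMapHom (Comma.transferHom K α β) (Comma.transferHom_naturality K α β)

end CategoryTheory.Adjunction

/-- `F ⊣ U` if and only if there is an equivalence of categories `F↓A ≌ X↓U` between the comma
categories commuting with the canonical projections to `X` and to `A`. -/
theorem adjunction_iff_comma_equivalence
    {X : Type*} {A : Type*} [Category X] [Category A] (F : X ⥤ A) (U : A ⥤ X) :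
    Nonempty (F ⊣ U) ↔
      ∃ K : Comma F (𝟭 A) ≌ Comma (𝟭 X) U,
        K.functor ⋙ Comma.fst (𝟭 X) U = Comma.fst F (𝟭 A) ∧
        K.functor ⋙ Comma.snd (𝟭 X) U = Comma.snd F (𝟭 A) :=
  ⟨fun ⟨adj⟩ => ⟨adj.commaEquiv, rfl, rfl⟩,
    fun ⟨K, hfst, hsnd⟩ => ⟨.ofCommaFunctor K.functor (eqToIso hfst) (eqToIso hsnd)⟩⟩
end

section
/- Let φ : A ⥤ B, ψ : C ⥤ B, and ℓ : A ⥤ C be functors between categories, and let λ : φ ⟶ ℓ ⋙ ψ be a natural transformation. Then (ℓ, λ) is an absolute left lifting diagram — meaning that for every category Z and all functors p : Z ⥤ A, q : Z ⥤ C, the map sending a natural transformation μ : p ⋙ ℓ ⟶ q to the composite natural transformation (λ whiskered with p) followed by (ψ whiskered with μ) : p ⋙ φ ⟶ q ⋙ ψ is a bijection — if and only if for every object a of A, the pair (ℓ(a), λ_a) is an initial object of the comma category of arrows from φ(a) to ψ (the structured-arrow category StructuredArrow (φ a) ψ). -/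
universe v₁ u₁ v₂ u₂ v₃ u₃ v₄ u₄

open CategoryTheory

/-- `(ℓ, lam)` is an absolute left lifting diagram of `φ` through `ψ` if for all functors
`p : Z ⥤ A` and `q : Z ⥤ C`, pasting with `lam` gives a bijection from natural
transformations `p ⋙ ℓ ⟶ q` to natural transformations `p ⋙ φ ⟶ q ⋙ ψ`. -/
def IsAbsoluteLeftLifting {A : Type u₁} [Category.{v₁} A] {B : Type u₂} [Category.{v₂} B]
    {C : Type u₃} [Category.{v₃} C] (φ : A ⥤ B) (ψ : C ⥤ B) (ℓ : A ⥤ C)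
    (lam : φ ⟶ ℓ ⋙ ψ) : Prop :=
  ∀ {Z : Type u₄} [Category.{v₄} Z] (p : Z ⥤ A) (q : Z ⥤ C),
    Function.Bijective
      (fun μ : p ⋙ ℓ ⟶ q => (Functor.whiskerLeft p lam ≫ Functor.whiskerRight μ ψ :
        p ⋙ φ ⟶ q ⋙ ψ))

/-!
Pasting with `lam` is computed componentwise: the `z`-component of the pasted transformation is
`lam.app (p.obj z) ≫ ψ.map (μ.app z)`. Hence `(ℓ, lam)` is an absolute left lifting exactly when
every map `g ↦ lam.app a ≫ ψ.map g : (ℓ.obj a ⟶ c) → (φ.obj a ⟶ ψ.obj c)` is bijective, which is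
initiality of `(ℓ.obj a, lam.app a)`. Necessity is tested on constant functors out of a one-object
category; for sufficiency, the componentwise inverses are natural because `g ↦ lam.app a ≫ ψ.map g`
is injective.
-/

namespace CategoryTheory.StructuredArrow

open Limits Function

variable {B : Type u₂} [Category.{v₂} B] {C : Type u₃} [Category.{v₃} C]

theorem nonempty_isInitial_mk_iff (ψ : C ⥤ B) {b : B} {x : C} (f : b ⟶ ψ.obj x) :
    Nonempty (IsInitial (mk f)) ↔ ∀ c : C, Bijective fun g : x ⟶ c => f ≫ ψ.map g := by
  refine ⟨fun ⟨h⟩ c => bijective_iff_existsUnique _ |>.2 fun k =>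
    IsUniversal.existsUnique h (mk k), fun h => ?_⟩
  choose desc hdesc using fun g : StructuredArrow b ψ => (h g.right).2 g.hom
  exact ⟨IsInitial.ofUniqueHom (fun g => homMk (desc g) (hdesc g)) fun g m =>
    ext _ _ <| (h g.right).1 <| (w m).trans (hdesc g).symm⟩

end CategoryTheory.StructuredArrow

section

open Function

variable {A : Type u₁} [Category.{v₁} A] {B : Type u₂} [Category.{v₂} B]
  {C : Type u₃} [Category.{v₃} C] (φ : A ⥤ B) (ψ : C ⥤ B) (ℓ : A ⥤ C) (lam : φ ⟶ ℓ ⋙ ψ)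

theorem bijective_pasting_app_of_bijective_const {Z : Type u₄} [Category.{v₄} Z] (z : Z)
    (a : A) (c : C)
    (h : Bijective fun μ : (Functor.const Z).obj a ⋙ ℓ ⟶ (Functor.const Z).obj c =>
      (Functor.whiskerLeft _ lam ≫ Functor.whiskerRight μ ψ :
        (Functor.const Z).obj a ⋙ φ ⟶ (Functor.const Z).obj c ⋙ ψ)) :
    Bijective fun g : ℓ.obj a ⟶ c => lam.app a ≫ ψ.map g := by
  let constHom {x : A} {y : C} (g : ℓ.obj x ⟶ y) :
      (Functor.const Z).obj x ⋙ ℓ ⟶ (Functor.const Z).obj y :=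
    (Functor.constComp Z x ℓ).hom ≫ (Functor.const Z).map g
  refine ⟨fun g g' hg => ?_, fun f => ?_⟩
  · have := h.1 (a₁ := constHom g) (a₂ := constHom g') (by ext; simpa [constHom] using hg)
    simpa [constHom] using NatTrans.congr_app this z
  · obtain ⟨μ, hμ⟩ := h.2 <| (Functor.constComp Z a φ).hom ≫ (Functor.const Z).map f ≫
      (Functor.constComp Z c ψ).inv
    exact ⟨μ.app z, by simpa using NatTrans.congr_app hμ z⟩

theorem isAbsoluteLeftLifting_of_bijective_pasting_app
    (h : ∀ a c, Bijective fun g : ℓ.obj a ⟶ c => lam.app a ≫ ψ.map g) :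
    IsAbsoluteLeftLifting.{v₁, u₁, v₂, u₂, v₃, u₃, v₄, u₄} φ ψ ℓ lam := by
  intro Z _ p q
  refine ⟨fun μ μ' hμ => ?_, fun τ => ?_⟩
  · ext z
    exact (h _ _).1 (by simpa using NatTrans.congr_app hμ z)
  · choose μ hμ using fun z => (h (p.obj z) (q.obj z)).2 (τ.app z)
    beta_reduce at hμ
    refine ⟨{ app := μ, naturality := fun z z' u => (h _ _).1 ?_ }, by ext z; simpa using hμ z⟩
    calc lam.app (p.obj z) ≫ ψ.map (ℓ.map (p.map u) ≫ μ z')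
        = φ.map (p.map u) ≫ lam.app (p.obj z') ≫ ψ.map (μ z') := by simp
      _ = lam.app (p.obj z) ≫ ψ.map (μ z ≫ q.map u) := by
          rw [hμ z', ψ.map_comp, reassoc_of% (hμ z)]
          exact τ.naturality u

theorem isAbsoluteLeftLifting_iff_bijective_pasting_app :
    IsAbsoluteLeftLifting.{v₁, u₁, v₂, u₂, v₃, u₃, v₄, u₄} φ ψ ℓ lam ↔
      ∀ a c, Bijective fun g : ℓ.obj a ⟶ c => lam.app a ≫ ψ.map g :=
  ⟨fun h a c => bijective_pasting_app_of_bijective_const φ ψ ℓ lam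
      (ULiftHom.objUp (ULift.up (Discrete.mk PUnit.unit)) :
        ULiftHom.{v₄} (ULift.{u₄} (Discrete PUnit.{1}))) a c (h _ _),
    isAbsoluteLeftLifting_of_bijective_pasting_app φ ψ ℓ lam⟩

end

/-- `(ℓ, lam)` is an absolute left lifting diagram if and only if, for every object `a` of
`A`, the pair `(ℓ a, lam.app a)` is an initial object of the comma category
`StructuredArrow (φ a) ψ`. -/
theorem isAbsoluteLeftLifting_iff_pointwise_initial
    {A : Type u₁} [Category.{v₁} A] {B : Type u₂} [Category.{v₂} B]
    {C : Type u₃} [Category.{v₃} C] (φ : A ⥤ B) (ψ : C ⥤ B) (ℓ : A ⥤ C)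
    (lam : φ ⟶ ℓ ⋙ ψ) :
    IsAbsoluteLeftLifting.{v₁, u₁, v₂, u₂, v₃, u₃, v₄, u₄} φ ψ ℓ lam ↔
      ∀ a : A, Nonempty (Limits.IsInitial
        (StructuredArrow.mk (lam.app a) : StructuredArrow (φ.obj a) ψ)) := by
  simp only [isAbsoluteLeftLifting_iff_bijective_pasting_app,
    StructuredArrow.nonempty_isInitial_mk_iff]
end

section
/- Let φ : A ⥤ B, ψ : C ⥤ B, and ℓ : A ⥤ C be functors between categories, and let λ : φ ⟶ ℓ ⋙ ψ be a natural transformation. Then (ℓ, λ) is an absolute left lifting diagram if and only if the canonical functor from the comma category ℓ↓C = Comma ℓ (𝟭 C) to the comma category φ↓ψ = Comma φ ψ — sending an object (a, c, k : ℓ(a) → c) to (a, c, λ_a ≫ ψ(k) : φ(a) → ψ(c)) and acting as the identity on the underlying morphism data — is an equivalence of categories. -/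
universe v₁ u₁ v₂ u₂ v₃ u₃ v₄ u₄

open CategoryTheory

/-- The canonical comparison functor `ℓ↓C ⥤ φ↓ψ` induced by `lam : φ ⟶ ℓ ⋙ ψ`, sending
`(a, c, k : ℓ a ⟶ c)` to `(a, c, lam.app a ≫ ψ.map k : φ a ⟶ ψ c)`. -/
@[simps]
def commaComparison {A : Type u₁} [Category.{v₁} A] {B : Type u₂} [Category.{v₂} B]
    {C : Type u₃} [Category.{v₃} C] (φ : A ⥤ B) (ψ : C ⥤ B) (ℓ : A ⥤ C)
    (lam : φ ⟶ ℓ ⋙ ψ) : Comma ℓ (𝟭 C) ⥤ Comma φ ψ where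
  obj x := { left := x.left, right := x.right, hom := lam.app x.left ≫ ψ.map x.hom }
  map {x y} u :=
    { left := u.left
      right := u.right
      w := by
        have hw := u.w
        dsimp at hw ⊢
        rw [Category.assoc, ← ψ.map_comp, ← hw, ψ.map_comp]
        simp only [← Category.assoc]
        congr 1
        exact lam.naturality u.left }

/- Both sides say that for all `a : A` and `c : C` the map `k ↦ lam.app a ≫ ψ.map k` from
`ℓ.obj a ⟶ c` to `φ.obj a ⟶ ψ.obj c` is bijective. For the lifting property, test against
constant functors out of a one-object category in one direction, and choose the components
pointwise in the other, naturality following from injectivity. The comparison functor is always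
faithful; it is full exactly when these maps are injective, and essentially surjective exactly
when they are surjective. -/

section

variable {A : Type u₁} [Category.{v₁} A] {B : Type u₂} [Category.{v₂} B]
    {C : Type u₃} [Category.{v₃} C] {φ : A ⥤ B} {ψ : C ⥤ B} {ℓ : A ⥤ C}
    {lam : φ ⟶ ℓ ⋙ ψ}

theorem app_comp_map_map_comp {a a' : A} {c : C} (f : a ⟶ a') (k : ℓ.obj a' ⟶ c) :
    lam.app a ≫ ψ.map (ℓ.map f ≫ k) = φ.map f ≫ lam.app a' ≫ ψ.map k := by
  rw [ψ.map_comp]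
  exact (lam.naturality_assoc f _).symm

theorem IsAbsoluteLeftLifting.bijective_app
    (H : IsAbsoluteLeftLifting.{v₁, u₁, v₂, u₂, v₃, u₃, v₄, u₄} φ ψ ℓ lam)
    (a : A) (c : C) :
    Function.Bijective fun k : ℓ.obj a ⟶ c => lam.app a ≫ ψ.map k := by
  let Z := ULiftHom.{v₄} (ULift.{u₄} (Discrete PUnit.{1}))
  let z : Z := ULiftHom.objUp (ULift.up ⟨⟨⟩⟩)
  let p := (Functor.const Z).obj a
  let q := (Functor.const Z).obj c
  have hpq := H p q
  let const (k : ℓ.obj a ⟶ c) : p ⋙ ℓ ⟶ q := { app _ := k }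
  refine ⟨fun k k' hk => ?_, fun h => ?_⟩
  · have : const k = const k' := hpq.1 (by ext; exact hk)
    exact congr_arg (NatTrans.app · z) this
  · obtain ⟨μ, hμ⟩ := hpq.2 { app _ := h }
    exact ⟨μ.app z, congr_arg (NatTrans.app · z) hμ⟩

theorem isAbsoluteLeftLifting_of_bijective_app
    (H : ∀ a c, Function.Bijective fun k : ℓ.obj a ⟶ c => lam.app a ≫ ψ.map k) :
    IsAbsoluteLeftLifting.{v₁, u₁, v₂, u₂, v₃, u₃, v₄, u₄} φ ψ ℓ lam := by
  intro Z _ p q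
  refine ⟨fun μ μ' h => ?_, fun ν => ?_⟩
  · ext z
    exact (H _ _).1 (congr_arg (NatTrans.app · z) h)
  · choose k hk using fun z => (H (p.obj z) (q.obj z)).2 (ν.app z)
    refine ⟨{ app := k, naturality := fun x y f => (H _ _).1 ?_ }, by ext z; exact hk z⟩
    refine (app_comp_map_map_comp _ _).trans ?_
    dsimp only at hk ⊢
    rw [hk y, ψ.map_comp, ← Category.assoc, hk x]
    exact ν.naturality f

theorem isAbsoluteLeftLifting_iff_bijective_app :
    IsAbsoluteLeftLifting.{v₁, u₁, v₂, u₂, v₃, u₃, v₄, u₄} φ ψ ℓ lam ↔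
      ∀ a c, Function.Bijective fun k : ℓ.obj a ⟶ c => lam.app a ≫ ψ.map k :=
  ⟨IsAbsoluteLeftLifting.bijective_app, isAbsoluteLeftLifting_of_bijective_app⟩

instance : (commaComparison φ ψ ℓ lam).Faithful where
  map_injective h := Comma.hom_ext _ _ (congr_arg (·.left) h) (congr_arg (·.right) h)

theorem commaComparison_full_iff :
    (commaComparison φ ψ ℓ lam).Full ↔
      ∀ a c, Function.Injective fun k : ℓ.obj a ⟶ c => lam.app a ≫ ψ.map k := by
  constructor
  · intro _ a c k k' hk
    let g : (commaComparison φ ψ ℓ lam).obj (.mk a c k) ⟶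
        (commaComparison φ ψ ℓ lam).obj (.mk a c k') :=
      { left := 𝟙 a, right := 𝟙 c
        w := show φ.map (𝟙 a) ≫ _ = _ ≫ ψ.map (𝟙 c) by simpa using hk.symm }
    let u := (commaComparison φ ψ ℓ lam).preimage g
    have hu := (commaComparison φ ψ ℓ lam).map_preimage g
    have hl : u.left = 𝟙 a := congr_arg CommaMorphism.left hu
    have hr : u.right = 𝟙 c := congr_arg CommaMorphism.right hu
    simpa [hl, hr] using u.w.symm
  · intro H
    refine ⟨fun {x y} g => ⟨{ left := g.left, right := g.right, w := H _ _ ?_ }, rfl⟩⟩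
    refine (app_comp_map_map_comp _ _).trans ?_
    dsimp only
    rw [ψ.map_comp]
    exact g.w.trans (Category.assoc _ _ _)

theorem app_comp_map_eq_hom_of_iso {y : Comma ℓ (𝟭 C)} {x : Comma φ ψ}
    (e : (commaComparison φ ψ ℓ lam).obj y ≅ x) :
    lam.app x.left ≫ ψ.map (ℓ.map e.inv.left ≫ y.hom ≫ e.hom.right) = x.hom := by
  let f : x.left ⟶ y.left := e.inv.left
  let g : y.right ⟶ x.right := e.hom.right
  let g' : x.right ⟶ y.right := e.inv.right
  have hw : φ.map f ≫ lam.app y.left ≫ ψ.map y.hom = x.hom ≫ ψ.map g' := e.inv.w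
  have hg : g' ≫ g = 𝟙 x.right := congr_arg CommaMorphism.right e.inv_hom_id
  show lam.app x.left ≫ ψ.map (ℓ.map f ≫ (y.hom : ℓ.obj y.left ⟶ y.right) ≫ g) = x.hom
  rw [app_comp_map_map_comp, ψ.map_comp, reassoc_of% hw, ← ψ.map_comp, hg, ψ.map_id,
    Category.comp_id]

theorem commaComparison_essSurj_iff :
    (commaComparison φ ψ ℓ lam).EssSurj ↔
      ∀ a c, Function.Surjective fun k : ℓ.obj a ⟶ c => lam.app a ≫ ψ.map k := by
  constructor
  · intro hF a c h
    obtain ⟨y, ⟨e⟩⟩ := hF.mem_essImage (.mk a c h)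
    exact ⟨_, app_comp_map_eq_hom_of_iso e⟩
  · intro H
    refine ⟨fun x => ?_⟩
    obtain ⟨k, hk : lam.app x.left ≫ ψ.map k = x.hom⟩ := H x.left x.right x.hom
    refine ⟨.mk x.left x.right k, ⟨eqToIso ?_⟩⟩
    show Comma.mk _ _ (lam.app x.left ≫ ψ.map k) = x
    rw [hk]

end

/-- `(ℓ, lam)` is an absolute left lifting diagram if and only if the canonical comparison
functor `ℓ↓C ⥤ φ↓ψ` is an equivalence of categories. -/
theorem isAbsoluteLeftLifting_iff_commaComparison_isEquivalence
    {A : Type u₁} [Category.{v₁} A] {B : Type u₂} [Category.{v₂} B]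
    {C : Type u₃} [Category.{v₃} C] (φ : A ⥤ B) (ψ : C ⥤ B) (ℓ : A ⥤ C)
    (lam : φ ⟶ ℓ ⋙ ψ) :
    IsAbsoluteLeftLifting.{v₁, u₁, v₂, u₂, v₃, u₃, v₄, u₄} φ ψ ℓ lam ↔
      (commaComparison φ ψ ℓ lam).IsEquivalence := by
  rw [isAbsoluteLeftLifting_iff_bijective_app]
  simp only [Function.Bijective, forall_and]
  rw [← commaComparison_full_iff, ← commaComparison_essSurj_iff]
  exact ⟨fun ⟨_, _⟩ => {}, fun h => ⟨h.full, h.essSurj⟩⟩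
end
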